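/- Let X,Y be finite random variables and define the bipartite graph on the disjoint union of their alphabets with an edge between x and y iff p(x,y)>0. If Q satisfies I(Q;Y|X)=0 and I(Q;X|Y)=0, then the conditional distribution p(q|x) is constant on each connected component of this graph, i.e., if x and x' lie in the same connected component then p(q|x)=p(q|x') for all q. -/
import Mathlib


open Finset

open Classical in
/-- Probability that random variable `X` (on finite weighted space `p`) equals `a`. -/
noncomputable def prob {Ω α : Type*} [Fintype Ω] (p : Ω → ℝ) (X : Ω → α) (a : α) : ℝ :=
  ∑ ω, if X ω = a then p ω else 0

/-- Shannon entropy of a random variable. -/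
noncomputable def ent {Ω α : Type*} [Fintype Ω] [Fintype α] (p : Ω → ℝ) (X : Ω → α) : ℝ :=
  ∑ a, Real.negMulLog (prob p X a)

/-- Conditional entropy H(X|Y). -/
noncomputable def condEnt {Ω α β : Type*} [Fintype Ω] [Fintype α] [Fintype β]
    (p : Ω → ℝ) (X : Ω → α) (Y : Ω → β) : ℝ :=
  ent p (fun ω => (X ω, Y ω)) - ent p Y

/-- Mutual information I(X;Y). -/
noncomputable def mi {Ω α β : Type*} [Fintype Ω] [Fintype α] [Fintype β]
    (p : Ω → ℝ) (X : Ω → α) (Y : Ω → β) : ℝ :=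
  ent p X + ent p Y - ent p (fun ω => (X ω, Y ω))

/-- Conditional mutual information I(X;Y|Z). -/
noncomputable def cmi {Ω α β γ : Type*} [Fintype Ω] [Fintype α] [Fintype β] [Fintype γ]
    (p : Ω → ℝ) (X : Ω → α) (Y : Ω → β) (Z : Ω → γ) : ℝ :=
  ent p (fun ω => (X ω, Z ω)) + ent p (fun ω => (Y ω, Z ω))
    - ent p (fun ω => ((X ω, Y ω), Z ω)) - ent p Z

/-- `p` is a probability mass function. -/
def IsPMF {Ω : Type*} [Fintype Ω] (p : Ω → ℝ) : Prop :=
  (∀ ω, 0 ≤ p ω) ∧ ∑ ω, p ω = 1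

/-- Bipartite graph on 𝒳 ⊔ 𝒴 with an edge between x and y iff the joint pmf μ(x,y) > 0. -/
def edge {α β : Type*} (μ : α × β → ℝ) : α ⊕ β → α ⊕ β → Prop
  | Sum.inl x, Sum.inr y => 0 < μ (x, y)
  | Sum.inr y, Sum.inl x => 0 < μ (x, y)
  | _, _ => False

section aux
variable {Ω α β : Type*} [Fintype Ω]

lemma prob_nonneg (p : Ω → ℝ) (hp : ∀ ω, 0 ≤ p ω) (X : Ω → α) (a : α) : 0 ≤ prob p X a := by
  classical
  refine Finset.sum_nonneg fun ω _ => ?_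
  split <;> simp [hp ω]

lemma prob_congr (p : Ω → ℝ) (X : Ω → α) (Y : Ω → β) (a : α) (b : β)
    (h : ∀ ω, X ω = a ↔ Y ω = b) : prob p X a = prob p Y b := by
  classical
  unfold prob
  refine Finset.sum_congr rfl fun ω _ => ?_
  have := propext (h ω)
  congr 1

lemma sum_prob [Fintype α] (p : Ω → ℝ) (hs : ∑ ω, p ω = 1) (X : Ω → α) :
    ∑ a, prob p X a = 1 := by
  classical
  unfold prob
  rw [Finset.sum_comm]
  simpa using hs

lemma prob_fst [Fintype β] (p : Ω → ℝ) (F : Ω → α) (G : Ω → β) (a : α) :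
    prob p F a = ∑ b, prob p (fun ω => (F ω, G ω)) (a, b) := by
  classical
  unfold prob
  rw [Finset.sum_comm]
  refine Finset.sum_congr rfl fun ω _ => ?_
  by_cases h : F ω = a <;> simp [Prod.ext_iff, h]

lemma prob_snd [Fintype α] (p : Ω → ℝ) (F : Ω → α) (G : Ω → β) (b : β) :
    prob p G b = ∑ a, prob p (fun ω => (F ω, G ω)) (a, b) := by
  classical
  unfold prob
  rw [Finset.sum_comm]
  refine Finset.sum_congr rfl fun ω _ => ?_
  by_cases h : G ω = b <;> simp [Prod.ext_iff, h]

end aux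

lemma gibbs {ι : Type*} [Fintype ι] (a b : ι → ℝ) (ha : ∀ i, 0 ≤ a i) (hb : ∀ i, 0 ≤ b i)
    (hpos : ∀ i, 0 < a i → 0 < b i)
    (hsum : ∑ i, a i = ∑ i, b i)
    (h : ∑ i, (a i * Real.log (a i) - a i * Real.log (b i)) = 0) : ∀ i, a i = b i := by
  have key : ∀ i ∈ Finset.univ (α := ι), a i - b i ≤ a i * Real.log (a i) - a i * Real.log (b i) := by
    intro i _
    rcases eq_or_lt_of_le (ha i) with h0 | h0
    · simp only [← h0, zero_mul, sub_zero, zero_sub, sub_self]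
      linarith [hb i]
    · have hbi := hpos i h0
      have hl := Real.log_le_sub_one_of_pos (show (0:ℝ) < b i / a i from div_pos hbi h0)
      rw [Real.log_div hbi.ne' h0.ne'] at hl
      have h2 := mul_le_mul_of_nonneg_left hl h0.le
      rw [mul_sub] at h2
      have h3 : a i * (b i / a i - 1) = b i - a i := by field_simp
      linarith
  have hsum2 : ∑ i, (a i - b i) = ∑ i, (a i * Real.log (a i) - a i * Real.log (b i)) := by
    rw [h, Finset.sum_sub_distrib, hsum, sub_self]
  have heach := (Finset.sum_eq_sum_iff_of_le key).mp hsum2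
  intro i
  have hi := heach i (Finset.mem_univ i)
  rcases eq_or_lt_of_le (ha i) with h0 | h0
  · rw [← h0] at hi ⊢
    simp at hi
    linarith
  · have hbi := hpos i h0
    by_contra hne
    have hne' : b i / a i ≠ 1 := by
      intro hh
      rw [div_eq_one_iff_eq h0.ne'] at hh
      exact hne hh.symm
    have hl := Real.log_lt_sub_one_of_pos (div_pos hbi h0) hne'
    rw [Real.log_div hbi.ne' h0.ne'] at hl
    have h2 := mul_lt_mul_of_pos_left hl h0
    rw [mul_sub] at h2
    have h3 : a i * (b i / a i - 1) = b i - a i := by field_simp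
    linarith

set_option linter.unusedSectionVars false
section ci
variable {Ω 𝒜 ℬ 𝒞 : Type*} [Fintype Ω] [Fintype 𝒜] [Fintype ℬ] [Fintype 𝒞]
  (p : Ω → ℝ) (A : Ω → 𝒜) (B : Ω → ℬ) (C : Ω → 𝒞)

lemma marg3_b (a : 𝒜) (c : 𝒞) :
    prob p (fun ω => (A ω, C ω)) (a, c) = ∑ b, prob p (fun ω => (A ω, B ω, C ω)) (a, b, c) := by
  classical
  unfold prob
  rw [Finset.sum_comm]
  refine Finset.sum_congr rfl fun ω _ => ?_
  by_cases hA : A ω = a <;> by_cases hC : C ω = c <;> simp [Prod.ext_iff, hA, hC]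

lemma marg3_a (b : ℬ) (c : 𝒞) :
    prob p (fun ω => (B ω, C ω)) (b, c) = ∑ a, prob p (fun ω => (A ω, B ω, C ω)) (a, b, c) := by
  classical
  unfold prob
  rw [Finset.sum_comm]
  refine Finset.sum_congr rfl fun ω _ => ?_
  by_cases hB : B ω = b <;> by_cases hC : C ω = c <;> simp [Prod.ext_iff, hB, hC]

lemma marg3_ab (c : 𝒞) :
    prob p C c = ∑ a, ∑ b, prob p (fun ω => (A ω, B ω, C ω)) (a, b, c) := by
  rw [prob_snd p A C c]
  exact Finset.sum_congr rfl fun a _ => marg3_b p A B C a c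

lemma prob_assoc (a : 𝒜) (b : ℬ) (c : 𝒞) :
    prob p (fun ω => ((A ω, B ω), C ω)) ((a, b), c)
      = prob p (fun ω => (A ω, B ω, C ω)) (a, b, c) := by
  refine prob_congr p _ _ _ _ fun ω => ?_
  simp [Prod.ext_iff, and_assoc]

lemma ci (hp : IsPMF p) (hC : ∀ c, 0 < prob p C c) (h : cmi p A B C = 0) :
    ∀ a b c, prob p (fun ω => (A ω, B ω, C ω)) (a, b, c) * prob p C c
      = prob p (fun ω => (A ω, C ω)) (a, c) * prob p (fun ω => (B ω, C ω)) (b, c) := by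
  classical
  set r : 𝒜 → ℬ → 𝒞 → ℝ := fun a b c => prob p (fun ω => (A ω, B ω, C ω)) (a, b, c) with hr
  set mAC : 𝒜 → 𝒞 → ℝ := fun a c => prob p (fun ω => (A ω, C ω)) (a, c) with hmAC
  set mBC : ℬ → 𝒞 → ℝ := fun b c => prob p (fun ω => (B ω, C ω)) (b, c) with hmBC
  set pC : 𝒞 → ℝ := fun c => prob p C c with hpC
  have hr0 : ∀ a b c, 0 ≤ r a b c := fun a b c => prob_nonneg p hp.1 _ _
  have hmb : ∀ a c, mAC a c = ∑ b, r a b c := fun a c => marg3_b p A B C a c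
  have hma : ∀ b c, mBC b c = ∑ a, r a b c := fun b c => marg3_a p A B C b c
  have hmab : ∀ c, pC c = ∑ a, ∑ b, r a b c := fun c => marg3_ab p A B C c
  have hACpos : ∀ a b c, 0 < r a b c → 0 < mAC a c := by
    intro a b c h0
    rw [hmb]
    exact lt_of_lt_of_le h0 (Finset.single_le_sum (fun b' _ => hr0 a b' c) (Finset.mem_univ b))
  have hBCpos : ∀ a b c, 0 < r a b c → 0 < mBC b c := by
    intro a b c h0
    rw [hma]
    exact lt_of_lt_of_le h0 (Finset.single_le_sum (fun a' _ => hr0 a' b c) (Finset.mem_univ a))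
  -- the "independent" distribution
  set q : 𝒜 × ℬ × 𝒞 → ℝ := fun t => mAC t.1 t.2.2 * mBC t.2.1 t.2.2 / pC t.2.2 with hq
  have hq0 : ∀ t, 0 ≤ q t := fun ⟨a, b, c⟩ =>
    div_nonneg (mul_nonneg (prob_nonneg p hp.1 _ _) (prob_nonneg p hp.1 _ _)) (hC _).le
  have hqpos : ∀ t : 𝒜 × ℬ × 𝒞, 0 < r t.1 t.2.1 t.2.2 → 0 < q t := by
    rintro ⟨a, b, c⟩ h0
    exact div_pos (mul_pos (hACpos a b c h0) (hBCpos a b c h0)) (hC c)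
  have hsumr : ∑ t : 𝒜 × ℬ × 𝒞, r t.1 t.2.1 t.2.2 = 1 := by
    rw [← sum_prob p hp.2 (fun ω => (A ω, B ω, C ω))]
  have hsumq : ∑ t : 𝒜 × ℬ × 𝒞, q t = 1 := by
    rw [Fintype.sum_prod_type]
    have : ∀ a, ∑ bc : ℬ × 𝒞, q (a, bc) = ∑ c, ∑ b, mAC a c * mBC b c / pC c := by
      intro a
      rw [Fintype.sum_prod_type, Finset.sum_comm]
    rw [Finset.sum_congr rfl fun a _ => this a, Finset.sum_comm]
    have : ∀ c, ∑ a, ∑ b, mAC a c * mBC b c / pC c = pC c := by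
      intro c
      have h1 : ∀ a, ∑ b, mAC a c * mBC b c / pC c = mAC a c * pC c / pC c := by
        intro a
        rw [← Finset.sum_div, ← Finset.mul_sum]
        congr 2
        show ∑ b, mBC b c = prob p C c
        rw [prob_snd p B C c]
      rw [Finset.sum_congr rfl fun a _ => h1 a]
      have h2 : ∀ a, mAC a c * pC c / pC c = mAC a c := fun a =>
        mul_div_cancel_right₀ _ (hC c).ne'
      rw [Finset.sum_congr rfl fun a _ => h2 a]
      show ∑ a, mAC a c = prob p C c
      rw [prob_snd p A C c]
    rw [Finset.sum_congr rfl fun c _ => this c, hpC]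
    exact sum_prob p hp.2 C
  -- entropy expansions
  have eAC : ent p (fun ω => (A ω, C ω)) = ∑ a, ∑ b, ∑ c, -(r a b c * Real.log (mAC a c)) := by
    unfold ent
    rw [Fintype.sum_prod_type]
    refine Finset.sum_congr rfl fun a _ => ?_
    rw [Finset.sum_comm]
    refine Finset.sum_congr rfl fun c _ => ?_
    show Real.negMulLog (mAC a c) = _
    rw [Real.negMulLog, Finset.sum_neg_distrib, ← Finset.sum_mul, ← hmb a c, neg_mul]
  have eBC : ent p (fun ω => (B ω, C ω)) = ∑ a, ∑ b, ∑ c, -(r a b c * Real.log (mBC b c)) := by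
    unfold ent
    rw [Fintype.sum_prod_type]
    rw [show (∑ a, ∑ b, ∑ c, -(r a b c * Real.log (mBC b c)))
        = ∑ b, ∑ a, ∑ c, -(r a b c * Real.log (mBC b c)) from Finset.sum_comm]
    refine Finset.sum_congr rfl fun b _ => ?_
    rw [Finset.sum_comm]
    refine Finset.sum_congr rfl fun c _ => ?_
    show Real.negMulLog (mBC b c) = _
    rw [Real.negMulLog, Finset.sum_neg_distrib, ← Finset.sum_mul, ← hma b c, neg_mul]
  have eC : ent p C = ∑ a, ∑ b, ∑ c, -(r a b c * Real.log (pC c)) := by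
    unfold ent
    rw [show (∑ a, ∑ b, ∑ c, -(r a b c * Real.log (pC c)))
        = ∑ c, ∑ a, ∑ b, -(r a b c * Real.log (pC c)) from ?_]
    · refine Finset.sum_congr rfl fun c _ => ?_
      show Real.negMulLog (pC c) = _
      rw [Real.negMulLog, neg_mul]
      have : ∀ a, ∑ b, -(r a b c * Real.log (pC c)) = -((∑ b, r a b c) * Real.log (pC c)) := by
        intro a
        rw [Finset.sum_neg_distrib, ← Finset.sum_mul]
      rw [Finset.sum_congr rfl fun a _ => this a, Finset.sum_neg_distrib, ← Finset.sum_mul,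
        ← hmab c]
    · calc ∑ a, ∑ b, ∑ c, -(r a b c * Real.log (pC c))
          = ∑ a, ∑ c, ∑ b, -(r a b c * Real.log (pC c)) :=
            Finset.sum_congr rfl fun a _ => Finset.sum_comm
        _ = ∑ c, ∑ a, ∑ b, -(r a b c * Real.log (pC c)) := Finset.sum_comm
  have eABC : ent p (fun ω => ((A ω, B ω), C ω)) = ∑ a, ∑ b, ∑ c, Real.negMulLog (r a b c) := by
    unfold ent
    rw [Fintype.sum_prod_type, Fintype.sum_prod_type]
    refine Finset.sum_congr rfl fun a _ => Finset.sum_congr rfl fun b _ =>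
      Finset.sum_congr rfl fun c _ => ?_
    rw [prob_assoc p A B C a b c]
  -- cmi as a single triple sum
  have hcmi : cmi p A B C = ∑ a, ∑ b, ∑ c,
      (-(r a b c * Real.log (mAC a c)) + -(r a b c * Real.log (mBC b c))
        - Real.negMulLog (r a b c) - -(r a b c * Real.log (pC c))) := by
    rw [cmi, eAC, eBC, eC, eABC, ← Finset.sum_add_distrib, ← Finset.sum_sub_distrib,
      ← Finset.sum_sub_distrib]
    refine Finset.sum_congr rfl fun a _ => ?_
    rw [← Finset.sum_add_distrib, ← Finset.sum_sub_distrib, ← Finset.sum_sub_distrib]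
    refine Finset.sum_congr rfl fun b _ => ?_
    rw [← Finset.sum_add_distrib, ← Finset.sum_sub_distrib, ← Finset.sum_sub_distrib]
  -- per-term identification with KL integrand
  have hterm : ∀ a b c,
      (-(r a b c * Real.log (mAC a c)) + -(r a b c * Real.log (mBC b c))
        - Real.negMulLog (r a b c) - -(r a b c * Real.log (pC c)))
      = r a b c * Real.log (r a b c) - r a b c * Real.log (q (a, b, c)) := by
    intro a b c
    rcases eq_or_lt_of_le (hr0 a b c) with h0 | h0
    · simp [← h0, Real.negMulLog]
    · have h1 := hACpos a b c h0
      have h2 := hBCpos a b c h0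
      have h3 := hC c
      rw [show q (a, b, c) = mAC a c * mBC b c / pC c from rfl, Real.negMulLog,
        Real.log_div (mul_pos h1 h2).ne' h3.ne', Real.log_mul h1.ne' h2.ne']
      ring
  have hKL : ∑ t : 𝒜 × ℬ × 𝒞,
      (r t.1 t.2.1 t.2.2 * Real.log (r t.1 t.2.1 t.2.2)
        - r t.1 t.2.1 t.2.2 * Real.log (q t)) = 0 := by
    rw [Fintype.sum_prod_type]
    have : ∀ a, ∑ bc : ℬ × 𝒞, (r a bc.1 bc.2 * Real.log (r a bc.1 bc.2)
        - r a bc.1 bc.2 * Real.log (q (a, bc))) = ∑ b, ∑ c, (r a b c * Real.log (r a b c)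
        - r a b c * Real.log (q (a, b, c))) := fun a => Fintype.sum_prod_type _
    rw [Finset.sum_congr rfl fun a _ => this a]
    rw [show (∑ a, ∑ b, ∑ c, (r a b c * Real.log (r a b c) - r a b c * Real.log (q (a, b, c))))
      = cmi p A B C from by
        rw [hcmi]
        exact Finset.sum_congr rfl fun a _ => Finset.sum_congr rfl fun b _ =>
          Finset.sum_congr rfl fun c _ => (hterm a b c).symm]
    exact h
  have := gibbs (fun t : 𝒜 × ℬ × 𝒞 => r t.1 t.2.1 t.2.2) q
    (fun t => hr0 _ _ _) hq0 hqpos (by rw [hsumr, hsumq]) hKL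
  intro a b c
  have heq := this (a, b, c)
  show r a b c * pC c = mAC a c * mBC b c
  rw [show r a b c = q (a, b, c) from heq,
    show q (a, b, c) = mAC a c * mBC b c / pC c from rfl,
    div_mul_cancel₀ _ (hC c).ne']

end ci

theorem stmt1 {Ω 𝒳 𝒴 𝒬 : Type*} [Fintype Ω] [Fintype 𝒳] [Fintype 𝒴] [Fintype 𝒬]
    (p : Ω → ℝ) (hp : IsPMF p) (X : Ω → 𝒳) (Y : Ω → 𝒴) (Q : Ω → 𝒬)
    (hX : ∀ x, 0 < prob p X x) (hY : ∀ y, 0 < prob p Y y)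
    (h1 : cmi p Q Y X = 0) (h2 : cmi p Q X Y = 0) :
    ∀ x x' : 𝒳,
      Relation.EqvGen (edge (fun ab => prob p (fun ω => (X ω, Y ω)) ab))
        (Sum.inl x) (Sum.inl x') →
      ∀ q, prob p (fun ω => (Q ω, X ω)) (q, x) / prob p X x
          = prob p (fun ω => (Q ω, X ω)) (q, x') / prob p X x' := by
  have ci1 := ci p Q Y X hp hX h1
  have ci2 := ci p Q X Y hp hY h2
  intro x x' hxx' q
  -- the conditional distribution as a function on the sum type
  let g : 𝒳 ⊕ 𝒴 → ℝ := Sum.elim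
    (fun x => prob p (fun ω => (Q ω, X ω)) (q, x) / prob p X x)
    (fun y => prob p (fun ω => (Q ω, Y ω)) (q, y) / prob p Y y)
  have key : ∀ (x : 𝒳) (y : 𝒴), 0 < prob p (fun ω => (X ω, Y ω)) (x, y) →
      prob p (fun ω => (Q ω, X ω)) (q, x) / prob p X x
        = prob p (fun ω => (Q ω, Y ω)) (q, y) / prob p Y y := by
    intro x y hJ
    have e1 := ci1 q y x
    have e2 := ci2 q x y
    have hYX : prob p (fun ω => (Y ω, X ω)) (y, x)
        = prob p (fun ω => (X ω, Y ω)) (x, y) :=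
      prob_congr p _ _ _ _ fun ω => by simp only [Prod.ext_iff]; tauto
    have hr12 : prob p (fun ω => (Q ω, Y ω, X ω)) (q, y, x)
        = prob p (fun ω => (Q ω, X ω, Y ω)) (q, x, y) :=
      prob_congr p _ _ _ _ fun ω => by simp only [Prod.ext_iff]; tauto
    rw [hYX] at e1
    rw [div_eq_div_iff (hX x).ne' (hY y).ne']
    refine mul_right_cancel₀ hJ.ne' ?_
    linear_combination (prob p X x) * e2 - (prob p Y y) * e1
      + (prob p X x * prob p Y y) * hr12
  have hedge : ∀ u v, edge (fun ab => prob p (fun ω => (X ω, Y ω)) ab) u v → g u = g v := by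
    rintro (x1 | y1) (x2 | y2) huv
    · exact huv.elim
    · exact key x1 y2 huv
    · exact (key x2 y1 huv).symm
    · exact huv.elim
  have hconst : ∀ u v, Relation.EqvGen (edge (fun ab => prob p (fun ω => (X ω, Y ω)) ab)) u v →
      g u = g v := by
    intro u v h
    induction h with
    | rel u v h => exact hedge u v h
    | refl u => rfl
    | symm u v _ ih => exact ih.symm
    | trans u v w _ _ ih1 ih2 => exact ih1.trans ih2
  simpa [g] using hconst _ _ hxx'
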